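/- Let n ≥ 3. For every M ∈ M_sym0 and every ξ ∈ ℝⁿ with |ξ| = 1, one has 𝔸[ξ]M = 0 if and only if there exists v ∈ ℝⁿ such that M = v⊙ξ − ((v·ξ)/n)·Id. Consequently the wave cone Λ_𝒜 := ⋃_{|ξ|=1} Ker(𝔸[ξ]) equals {v⊙ξ − ((v·ξ)/n)·Id : v ∈ ℝⁿ, ξ ∈ ℝⁿ \ {0}}. -/

import Mathlib

/-! For a unit vector `ξ` the symbol is itself a deviatoric product minus `M`:
`𝔸[ξ]M = w ⊙ ξ − ((w·ξ)/n) Id − M` with `w = 2Mξ − ((n−2)/(n−1)) (ξᵀMξ) ξ`. So `𝔸[ξ]M = 0`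
gives `M` the required form with `v = w`; conversely, for `M = v ⊙ ξ − ((v·ξ)/n) Id` a direct
computation returns `w = v`. Deviatoric products are symmetric and trace-free, and they are
unchanged under `(v, ξ) ↦ (r v, ξ / r)`, so any `ξ ≠ 0` may be normalised, which identifies the
wave cone. -/

/-- Euclidean dot product on `Fin n → ℝ`. -/
def dotp {n : ℕ} (a b : Fin n → ℝ) : ℝ := ∑ i, a i * b i

/-- Matrix–vector multiplication. -/
def mulv {n : ℕ} (M : Fin n → Fin n → ℝ) (v : Fin n → ℝ) (i : Fin n) : ℝ := ∑ j, M i j * v j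

/-- `a ⊗_{ℰ_d} b := a⊙b − ((a·b)/n)·Id`, the deviatoric symmetric tensor product. -/
noncomputable def edT (n : ℕ) (a b : Fin n → ℝ) (i j : Fin n) : ℝ :=
  (a i * b j + a j * b i) / 2 - (dotp a b / (n : ℝ)) * (if i = j then 1 else 0)

/-- The symbol `𝔸[ξ]M := |ξ|²(Mξ⊗ξ + ξ⊗Mξ) − |ξ|⁴·M
  − ((ξᵀMξ)/(n−1))·[(n−2)·ξ⊗ξ + |ξ|²·Id]`. -/
noncomputable def symA (n : ℕ) (ξ : Fin n → ℝ) (M : Fin n → Fin n → ℝ) (i j : Fin n) : ℝ :=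
  dotp ξ ξ * (mulv M ξ i * ξ j + ξ i * mulv M ξ j) - (dotp ξ ξ) ^ 2 * M i j
    - (dotp ξ (mulv M ξ)) / ((n : ℝ) - 1) *
        (((n : ℝ) - 2) * (ξ i * ξ j) + dotp ξ ξ * (if i = j then 1 else 0))

open Finset Matrix

noncomputable def waveVector (n : ℕ) (M : Fin n → Fin n → ℝ) (ξ : Fin n → ℝ) : Fin n → ℝ :=
  (2 : ℝ) • mulv M ξ - (dotp ξ (mulv M ξ) * ((n - 2) / (n - 1))) • ξ

section

variable {n : ℕ}

lemma cast_ne_zero_and_sub_one_ne_zero (hn : 2 ≤ n) : (n : ℝ) ≠ 0 ∧ (n : ℝ) - 1 ≠ 0 := by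
  have : (2 : ℝ) ≤ n := by exact_mod_cast hn
  constructor <;> linarith

lemma dotp_eq_dotProduct (a b : Fin n → ℝ) : dotp a b = a ⬝ᵥ b := rfl

lemma mulv_edT (v ξ : Fin n → ℝ) :
    mulv (edT n v ξ) ξ = (dotp ξ ξ / 2) • v + (dotp v ξ / 2 - dotp v ξ / n) • ξ := by
  ext i
  have hcross : ∑ j, v j * (ξ i * ξ j) = (∑ j, v j * ξ j) * ξ i := by
    rw [sum_mul]; exact sum_congr rfl fun j _ => by ring
  simp only [mulv, edT, dotp, sub_mul, add_div, add_mul, div_mul_eq_mul_div, sum_sub_distrib,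
    sum_add_distrib, ← sum_div, mul_assoc, ← mul_sum, ite_mul, one_mul, zero_mul, mul_ite,
    mul_zero, sum_ite_eq, mem_univ, if_true, Pi.add_apply, Pi.smul_apply, smul_eq_mul]
  rw [hcross]
  ring

lemma dotp_mulv_edT (v ξ : Fin n → ℝ) :
    dotp ξ (mulv (edT n v ξ) ξ) = (1 - 1 / n) * dotp v ξ * dotp ξ ξ := by
  simp only [mulv_edT, dotp_eq_dotProduct, dotProduct_add, dotProduct_smul, smul_eq_mul,
    dotProduct_comm ξ v]
  ring

lemma dotp_waveVector (hn : 2 ≤ n) {M : Fin n → Fin n → ℝ} {ξ : Fin n → ℝ} (hξ : dotp ξ ξ = 1) :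
    dotp (waveVector n M ξ) ξ = n / (n - 1) * dotp ξ (mulv M ξ) := by
  obtain ⟨-, hn1⟩ := cast_ne_zero_and_sub_one_ne_zero hn
  rw [dotp_eq_dotProduct] at hξ
  simp only [waveVector, dotp_eq_dotProduct, sub_dotProduct, smul_dotProduct, smul_eq_mul,
    dotProduct_comm (mulv M ξ) ξ, hξ]
  field_simp
  ring

lemma symA_eq_edT_waveVector_sub (hn : 2 ≤ n) {ξ : Fin n → ℝ} (hξ : dotp ξ ξ = 1)
    (M : Fin n → Fin n → ℝ) (i j : Fin n) :
    symA n ξ M i j = edT n (waveVector n M ξ) ξ i j - M i j := by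
  obtain ⟨hn0, hn1⟩ := cast_ne_zero_and_sub_one_ne_zero hn
  rw [symA, edT, dotp_waveVector hn hξ, hξ]
  simp only [waveVector, Pi.sub_apply, Pi.smul_apply, smul_eq_mul]
  field_simp
  ring

lemma waveVector_edT (hn : 2 ≤ n) (v : Fin n → ℝ) {ξ : Fin n → ℝ} (hξ : dotp ξ ξ = 1) :
    waveVector n (edT n v ξ) ξ = v := by
  obtain ⟨hn0, hn1⟩ := cast_ne_zero_and_sub_one_ne_zero hn
  rw [waveVector, dotp_mulv_edT, mulv_edT, hξ]
  ext i
  simp only [Pi.sub_apply, Pi.add_apply, Pi.smul_apply, smul_eq_mul]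
  field_simp
  ring

theorem symA_eq_zero_iff (hn : 2 ≤ n) {ξ : Fin n → ℝ} (hξ : dotp ξ ξ = 1) (M : Fin n → Fin n → ℝ) :
    (∀ i j, symA n ξ M i j = 0) ↔ ∃ v : Fin n → ℝ, ∀ i j, M i j = edT n v ξ i j := by
  simp only [symA_eq_edT_waveVector_sub hn hξ, sub_eq_zero]
  constructor
  · exact fun h => ⟨waveVector n M ξ, fun i j => (h i j).symm⟩
  · rintro ⟨v, hv⟩ i j
    obtain rfl : M = edT n v ξ := funext₂ hv
    rw [waveVector_edT hn v hξ]

lemma edT_comm_index (v ξ : Fin n → ℝ) (i j : Fin n) : edT n v ξ i j = edT n v ξ j i := by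
  simp only [edT, eq_comm (a := i)]
  ring

lemma sum_edT_diag (hn : n ≠ 0) (v ξ : Fin n → ℝ) : ∑ i, edT n v ξ i i = 0 := by
  simp only [edT, if_true, mul_one, sum_sub_distrib, ← sum_div, sum_add_distrib, sum_const,
    card_univ, Fintype.card_fin, nsmul_eq_mul]
  rw [← dotp]
  have : (n : ℝ) ≠ 0 := Nat.cast_ne_zero.mpr hn
  field_simp
  ring

lemma edT_smul_smul (v ξ : Fin n → ℝ) {c : ℝ} (hc : c ≠ 0) :
    edT n (c • v) (c⁻¹ • ξ) = edT n v ξ := by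
  ext i j
  simp only [edT, dotp_eq_dotProduct, smul_dotProduct, dotProduct_smul, Pi.smul_apply,
    smul_eq_mul]
  field_simp

lemma exists_unit_edT_eq (v : Fin n → ℝ) {ξ : Fin n → ℝ} (hξ : ξ ≠ 0) :
    ∃ v' ξ' : Fin n → ℝ, dotp ξ' ξ' = 1 ∧ edT n v' ξ' = edT n v ξ := by
  have hpos : 0 < dotp ξ ξ := by
    have h := dotProduct_star_self_pos_iff.mpr hξ
    rwa [star_trivial] at h
  obtain ⟨r, hr, hr2⟩ : ∃ r : ℝ, 0 < r ∧ r ^ 2 = dotp ξ ξ :=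
    ⟨√(dotp ξ ξ), Real.sqrt_pos.mpr hpos, Real.sq_sqrt hpos.le⟩
  refine ⟨r • v, r⁻¹ • ξ, ?_, edT_smul_smul v ξ hr.ne'⟩
  rw [dotp_eq_dotProduct, smul_dotProduct, dotProduct_smul, ← dotp_eq_dotProduct, ← hr2,
    smul_eq_mul, smul_eq_mul]
  field_simp

end

/-- wave cone of the annihilator: for `n ≥ 3`, a symmetric trace-free
matrix `M` and a unit vector `ξ` satisfy `𝔸[ξ]M = 0` iff `M = v⊙ξ − ((v·ξ)/n)·Id` for
some `v ∈ ℝⁿ`; consequently `Λ_𝒜 = ⋃_{|ξ|=1} Ker 𝔸[ξ] = {v⊙ξ − ((v·ξ)/n)Id : v ∈ ℝⁿ, ξ ≠ 0}`. -/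
theorem wave_cone_of_annihilator {n : ℕ} (hn : 3 ≤ n) :
    (∀ M : Fin n → Fin n → ℝ, (∀ i j, M i j = M j i) → (∑ i, M i i = 0) →
      ∀ ξ : Fin n → ℝ, dotp ξ ξ = 1 →
        ((∀ i j, symA n ξ M i j = 0) ↔ ∃ v : Fin n → ℝ, ∀ i j, M i j = edT n v ξ i j)) ∧
    {M : Fin n → Fin n → ℝ | (∀ i j, M i j = M j i) ∧ (∑ i, M i i = 0) ∧
        ∃ ξ : Fin n → ℝ, dotp ξ ξ = 1 ∧ ∀ i j, symA n ξ M i j = 0}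
      = {M : Fin n → Fin n → ℝ |
          ∃ (v ξ : Fin n → ℝ), ξ ≠ 0 ∧ ∀ i j, M i j = edT n v ξ i j} := by
  have hn2 : 2 ≤ n := by omega
  refine ⟨fun M _ _ ξ hξ => symA_eq_zero_iff hn2 hξ M, ?_⟩
  ext M
  constructor
  · rintro ⟨-, -, ξ, hξ, hA⟩
    obtain ⟨v, hv⟩ := (symA_eq_zero_iff hn2 hξ M).mp hA
    refine ⟨v, ξ, ?_, hv⟩
    rintro rfl
    simp [dotp] at hξ
  · rintro ⟨v, ξ, hξ, hv⟩
    obtain ⟨v', ξ', hξ', hedT⟩ := exists_unit_edT_eq v hξ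
    obtain rfl : M = edT n v' ξ' := by rw [hedT]; exact funext₂ hv
    exact ⟨edT_comm_index v' ξ', sum_edT_diag (by omega) v' ξ', ξ', hξ',
      (symA_eq_zero_iff hn2 hξ' _).mpr ⟨v', fun _ _ => rfl⟩⟩
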